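/- arXiv:2109.11977 — 4 statements merged into one kernel-verified Lean document; each statement's English description precedes it below -/
import Mathlib

section
/- Suppose each subsystem i ∈ {1,…,N} has a safety controller C_i for the local dynamics f_i with safe set X_i, where the interconnection substitutes z_{ij} = h_{ji}(x_j). Then the composed controller C, defined by C(x) = {u | u_i ∈ C_i(x_i) for all i} for x with all x_i ∈ X_i and C(x) = ∅ otherwise, is a safety controller for the interconnected system Σ with safe set X = ∏ X_i: (1) C(x) ⊆ U for all x; (2) dom(C) ⊆ X; (3) for all x ∈ dom(C), u ∈ C(x), w ∈ W, f(x,u,w) ∈ dom(C). -/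
/-- Composition of local safety controllers yields a safety controller for the
interconnected system with safe set X = ∏ Xᵢ. -/
theorem composed_safety_controller {N : ℕ} {S Uty D Z : Fin N → Type*}
    (X : ∀ i, Set (S i)) (U : ∀ i, Set (Uty i)) (W : ∀ i, Set (D i))
    (h : ∀ j i : Fin N, S j → Z j)
    (f : ∀ i, S i → Uty i → (∀ j, Z j) → D i → S i)
    (C : ∀ i, S i → Set (Uty i))
    -- each Cᵢ is a local safety controller for Σᵢ and safe set Xᵢ:
    (hCU : ∀ i x, C i x ⊆ U i)
    (hdom : ∀ i x, (C i x).Nonempty → x ∈ X i)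
    (hsafe : ∀ i (x : ∀ j, S j), (∀ j, x j ∈ X j) →
        ∀ u ∈ C i (x i), ∀ w ∈ W i,
        (C i (f i (x i) u (fun j => h j i (x j)) w)).Nonempty) :
    -- the composed controller C(x) = {u | uᵢ ∈ Cᵢ(xᵢ) ∀ i} for x ∈ ∏ Xᵢ, ∅ otherwise
    let Ccomp : (∀ i, S i) → Set (∀ i, Uty i) :=
      fun x => {u | (∀ i, x i ∈ X i) ∧ ∀ i, u i ∈ C i (x i)}
    -- overall transition function with interconnection z_{ij} = h_{ji}(x_j)
    let F : (∀ i, S i) → (∀ i, Uty i) → (∀ i, D i) → (∀ i, S i) :=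
      fun x u w => fun i => f i (x i) (u i) (fun j => h j i (x j)) (w i)
    (∀ x, Ccomp x ⊆ Set.univ.pi U) ∧
    (∀ x, (Ccomp x).Nonempty → x ∈ Set.univ.pi X) ∧
    (∀ x u w, u ∈ Ccomp x → (∀ i, w i ∈ W i) → (Ccomp (F x u w)).Nonempty) := by
  intro Ccomp F
  refine ⟨fun x u hu => fun i _ => hCU i (x i) (hu.2 i),
    fun x ⟨u, hu⟩ => fun i _ => hu.1 i, ?_⟩
  intro x u w hu hw
  have hnext : ∀ i, (C i (F x u w i)).Nonempty :=
    fun i => hsafe i x hu.1 (u i) (hu.2 i) (w i) (hw i)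
  exact ⟨fun i => (hnext i).choose,
    ⟨fun i => hdom i _ (hnext i), fun i => (hnext i).choose_spec⟩⟩
end

section
/- If for each i ∈ {1,…,N}, C_i^{δ_i} is a δ_i-relaxed safety controller for subsystem Σ_i with relaxed safe set X_i + δ_i𝔹_i and relaxed input set U_i + δ_i𝔹_i, then the composed controller C^δ, defined by C^δ(x) = {u ∈ ∏(U_i + δ_i𝔹_i) | u_i ∈ C_i^{δ_i}(x_i) for all i} for x ∈ ∏(X_i + δ_i𝔹_i) and C^δ(x) = ∅ otherwise, is a δ-relaxed safety controller for the interconnected system Σ with relaxed safe set X + δ𝔹 and relaxed input set U + δ𝔹, where δ = max_i δ_i. -/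
open Pointwise

open Metric

lemma pi_add_closedBall_aux {N : ℕ} [NeZero N] {d : Fin N → ℕ}
    (S : ∀ i, Set (Fin (d i) → ℝ)) (δi : Fin N → ℝ) (hδi : ∀ i, 0 ≤ δi i)
    (δ : ℝ) (hδ : δ = ⨆ i, δi i) (y : ∀ i, Fin (d i) → ℝ)
    (hy : ∀ i, y i ∈ S i + closedBall (0 : Fin (d i) → ℝ) (δi i)) :
    y ∈ Set.univ.pi S + closedBall (0 : ∀ i, Fin (d i) → ℝ) δ := by
  have hle : ∀ i, δi i ≤ δ := by
    intro i
    rw [hδ]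
    exact le_ciSup (Set.Finite.bddAbove (Set.finite_range δi)) i
  have hδ0 : 0 ≤ δ := (hδi ⟨0, Nat.pos_of_ne_zero (NeZero.ne N)⟩).trans
    (hle ⟨0, Nat.pos_of_ne_zero (NeZero.ne N)⟩)
  choose a ha b hb hab using fun i => Set.mem_add.mp (hy i)
  rw [Set.mem_add]
  refine ⟨a, fun i _ => ha i, b, ?_, funext hab⟩
  rw [mem_closedBall, dist_pi_le_iff hδ0]
  intro i
  exact (mem_closedBall.mp (hb i)).trans (hle i)

/-- Composition of δᵢ-relaxed local safety controllers yields a δ-relaxed safety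
controller for the interconnected system, with δ = max_i δᵢ (infinity norms). -/
theorem composed_relaxed_safety_controller {N : ℕ} [NeZero N] {n m p : Fin N → ℕ}
    (X : ∀ i, Set (Fin (n i) → ℝ)) (U : ∀ i, Set (Fin (m i) → ℝ))
    (W : ∀ i, Set (Fin (n i) → ℝ))
    (h : ∀ j i : Fin N, (Fin (n j) → ℝ) → (Fin (p j) → ℝ))
    (f : ∀ i, (Fin (n i) → ℝ) → (Fin (m i) → ℝ) → (∀ j, Fin (p j) → ℝ) →
          (Fin (n i) → ℝ) → (Fin (n i) → ℝ))
    (δi : Fin N → ℝ) (hδi : ∀ i, 0 ≤ δi i)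
    (δ : ℝ) (hδ : δ = ⨆ i, δi i)
    (C : ∀ i, (Fin (n i) → ℝ) → Set (Fin (m i) → ℝ))
    -- each Cᵢ is a δᵢ-relaxed local safety controller:
    (hCU : ∀ i x, C i x ⊆ U i + closedBall (0 : Fin (m i) → ℝ) (δi i))
    (hdom : ∀ i x, (C i x).Nonempty → x ∈ X i + closedBall (0 : Fin (n i) → ℝ) (δi i))
    (hsafe : ∀ i (x : ∀ j, Fin (n j) → ℝ),
        (∀ j, x j ∈ X j + closedBall (0 : Fin (n j) → ℝ) (δi j)) →
        ∀ u ∈ C i (x i), ∀ w ∈ W i,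
        (C i (f i (x i) u (fun j => h j i (x j)) w)).Nonempty) :
    -- the composed controller C^δ
    let Ccomp : (∀ i, Fin (n i) → ℝ) → Set (∀ i, Fin (m i) → ℝ) :=
      fun x => {u | (∀ i, x i ∈ X i + closedBall (0 : Fin (n i) → ℝ) (δi i)) ∧
                    (∀ i, u i ∈ U i + closedBall (0 : Fin (m i) → ℝ) (δi i)) ∧
                    ∀ i, u i ∈ C i (x i)}
    let F : (∀ i, Fin (n i) → ℝ) → (∀ i, Fin (m i) → ℝ) →
            (∀ i, Fin (n i) → ℝ) → (∀ i, Fin (n i) → ℝ) :=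
      fun x u w => fun i => f i (x i) (u i) (fun j => h j i (x j)) (w i)
    -- C^δ is a δ-relaxed safety controller for Σ, X + δ𝔹 and U + δ𝔹:
    (∀ x, Ccomp x ⊆ Set.univ.pi U + closedBall (0 : ∀ i, Fin (m i) → ℝ) δ) ∧
    (∀ x, (Ccomp x).Nonempty → x ∈ Set.univ.pi X + closedBall (0 : ∀ i, Fin (n i) → ℝ) δ) ∧
    (∀ x u w, u ∈ Ccomp x → (∀ i, w i ∈ W i) → (Ccomp (F x u w)).Nonempty) := by
  intro Ccomp F
  refine ⟨?_, ?_, ?_⟩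
  · intro x u hu
    exact pi_add_closedBall_aux U δi hδi δ hδ u hu.2.1
  · rintro x ⟨u, hu⟩
    exact pi_add_closedBall_aux X δi hδi δ hδ x hu.1
  · rintro x u w ⟨hx, hU, hC⟩ hw
    have hne : ∀ i, (C i (F x u w i)).Nonempty := fun i =>
      hsafe i x hx (u i) (hC i) (w i) (hw i)
    choose v hv using hne
    exact ⟨v, fun i => hdom i _ ⟨v i, hv i⟩, fun i => hCU i _ (hv i), hv⟩
end

section
/- If Ω_i ⊆ X_i is a robust controlled invariant set for subsystem Σ_i for each i ∈ {1,…,N} (robust also against all internal inputs induced by the other subsystems' states in their safe sets), then the product Ω = ∏_{i=1}^N Ω_i is a robust controlled invariant set for the interconnected system Σ contained in X = ∏ X_i: for every x ∈ Ω there exists u ∈ U such that f(x,u,w) ∈ Ω for all w ∈ W. -/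
/-- The product of local robust controlled invariant sets is a robust controlled
invariant set of the interconnected system contained in X = ∏ Xᵢ. -/
theorem pi_RCI {N : ℕ} {S Uty D Z : Fin N → Type*}
    (X : ∀ i, Set (S i)) (U : ∀ i, Set (Uty i)) (W : ∀ i, Set (D i))
    (h : ∀ j i : Fin N, S j → Z j)
    (f : ∀ i, S i → Uty i → (∀ j, Z j) → D i → S i)
    (Ω : ∀ i, Set (S i))
    (hΩX : ∀ i, Ω i ⊆ X i)
    -- each Ωᵢ is RCI for Σᵢ, robust against all internal inputs from states in the safe sets
    (hRCI : ∀ i (x : ∀ j, S j), (∀ j, x j ∈ X j) → x i ∈ Ω i →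
        ∃ u ∈ U i, ∀ w ∈ W i, f i (x i) u (fun j => h j i (x j)) w ∈ Ω i) :
    Set.univ.pi Ω ⊆ Set.univ.pi X ∧
    ∀ x ∈ Set.univ.pi Ω, ∃ u ∈ Set.univ.pi U, ∀ w ∈ Set.univ.pi W,
      (fun i => f i (x i) (u i) (fun j => h j i (x j)) (w i)) ∈ Set.univ.pi Ω := by
  constructor
  · intro x hx i _
    exact hΩX i (hx i trivial)
  · intro x hx
    have hxX : ∀ j, x j ∈ X j := fun j => hΩX j (hx j trivial)
    choose u hu hinv using fun i => hRCI i x hxX (hx i trivial)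
    exact ⟨u, fun i _ => hu i, fun w hw i _ => hinv i (w i) (hw i trivial)⟩
end

section
/- If for each i, C_i^{ρ_i} is a ρ_i-inner safety controller for subsystem Σ_i with safe set X_i and input set U_i, then the composed controller C^ρ defined by C^ρ(x) = {u ∈ U | u_i ∈ C_i^{ρ_i}(x_i) for all i} for x ∈ X = ∏ X_i and ∅ otherwise, is a safety controller for the interconnected system Σ with safe set X and input set U = ∏ U_i. -/
/-- Composition of ρᵢ-inner local safety controllers yields a safety controller
for the interconnected linear system with safe set X = ∏ Xᵢ and inputs U = ∏ Uᵢ. -/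
theorem composed_inner_safety_controller {N : ℕ} {n m p : Fin N → ℕ}
    (A : ∀ i, Matrix (Fin (n i)) (Fin (n i)) ℝ)
    (B : ∀ i, Matrix (Fin (n i)) (Fin (m i)) ℝ)
    (D : ∀ i, Matrix (Fin (n i)) (Fin (p i)) ℝ)
    (X : ∀ i, Set (Fin (n i) → ℝ)) (U : ∀ i, Set (Fin (m i) → ℝ))
    (W : ∀ i, Set (Fin (n i) → ℝ))
    -- internal input zᵢ = H i x, determined by the other subsystems' states
    (H : ∀ i, (∀ j, Fin (n j) → ℝ) → (Fin (p i) → ℝ))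
    (ρi : Fin N → ℝ) (hρi : ∀ i, 0 < ρi i)
    (C : ∀ i, (Fin (n i) → ℝ) → Set (Fin (m i) → ℝ))
    -- each Cᵢ is a ρᵢ-inner safety controller for Σᵢ:
    (hCU : ∀ i x, C i x ⊆ U i)
    (hdom : ∀ i x, (C i x).Nonempty → x ∈ X i)
    (hsafe : ∀ i (x : ∀ j, Fin (n j) → ℝ), (∀ j, x j ∈ X j) →
        ∀ u ∈ C i (x i), ∀ w ∈ W i,
        (C i ((A i).mulVec (x i) + (B i).mulVec u + (D i).mulVec (H i x) + w)).Nonempty) :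
    -- composed controller C^ρ
    let Ccomp : (∀ i, Fin (n i) → ℝ) → Set (∀ i, Fin (m i) → ℝ) :=
      fun x => {u | (∀ i, x i ∈ X i) ∧ (∀ i, u i ∈ U i) ∧ ∀ i, u i ∈ C i (x i)}
    let F : (∀ i, Fin (n i) → ℝ) → (∀ i, Fin (m i) → ℝ) →
            (∀ i, Fin (n i) → ℝ) → (∀ i, Fin (n i) → ℝ) :=
      fun x u w => fun i =>
        (A i).mulVec (x i) + (B i).mulVec (u i) + (D i).mulVec (H i x) + w i
    (∀ x, Ccomp x ⊆ Set.univ.pi U) ∧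
    (∀ x, (Ccomp x).Nonempty → x ∈ Set.univ.pi X) ∧
    (∀ x u w, u ∈ Ccomp x → (∀ i, w i ∈ W i) → (Ccomp (F x u w)).Nonempty) := by
  intro Ccomp F
  refine ⟨fun x u hu => ?_, fun x ⟨u, hu⟩ => ?_, fun x u w hu hw => ?_⟩
  · exact fun i _ => hu.2.1 i
  · exact fun i _ => hu.1 i
  · have hsucc : ∀ i, (C i (F x u w i)).Nonempty :=
      fun i => hsafe i x hu.1 (u i) (hu.2.2 i) (w i) (hw i)
    choose u' hu' using hsucc
    exact ⟨u', fun i => hdom i _ ⟨u' i, hu' i⟩, fun i => hCU i _ (hu' i), hu'⟩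
end
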